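/- Let (G,·) be a Smarandache loop with S-subgroup (H,·). A bijection θ of G belongs to SBS(G,·) if and only if θ is an S-isomorphism of (G,·) onto some Smarandache f,g-principal isotope (G,∘) with f,g∈H. -/

import Mathlib

/-- A loop: a quasigroup with a two-sided identity element. -/
structure Loop (G : Type*) where
  mul : G → G → G
  e : G
  one_mul : ∀ x, mul e x = x
  mul_one : ∀ x, mul x e = x
  exU_right : ∀ a b, ∃! x, mul a x = b
  exU_left : ∀ a b, ∃! y, mul y a = b

namespace Loop

variable {G : Type*}

theorem mulRight_bijective (L : Loop G) (a : G) :
    Function.Bijective (fun y => L.mul y a) := by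
  constructor
  · intro x y hxy
    obtain ⟨z, hz, huniq⟩ := L.exU_left a (L.mul x a)
    exact (huniq x rfl).trans (huniq y (by simpa using hxy.symm)).symm
  · intro b
    obtain ⟨z, hz, -⟩ := L.exU_left a b
    exact ⟨z, hz⟩

theorem mulLeft_bijective (L : Loop G) (a : G) :
    Function.Bijective (fun y => L.mul a y) := by
  constructor
  · intro x y hxy
    obtain ⟨z, hz, huniq⟩ := L.exU_right a (L.mul a x)
    exact (huniq x rfl).trans (huniq y (by simpa using hxy.symm)).symm
  · intro b
    obtain ⟨z, hz, -⟩ := L.exU_right a b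
    exact ⟨z, hz⟩

/-- The right translation `R_a : y ↦ y · a`, as a permutation of `G`. -/
noncomputable def Rt (L : Loop G) (a : G) : Equiv.Perm G :=
  Equiv.ofBijective _ (L.mulRight_bijective a)

/-- The left translation `L_a : y ↦ a · y`, as a permutation of `G`. -/
noncomputable def Lt (L : Loop G) (a : G) : Equiv.Perm G :=
  Equiv.ofBijective _ (L.mulLeft_bijective a)

/-- `(U, V, W)` is an autotopism of `L` iff `xU · yV = (x·y)W` for all `x, y`. -/
def IsAutotopism (L : Loop G) (U V W : Equiv.Perm G) : Prop :=
  ∀ x y, L.mul (U x) (V y) = W (L.mul x y)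

/-- The set of autotopism triples of a loop. -/
def AUTset (L : Loop G) : Set (Equiv.Perm G × Equiv.Perm G × Equiv.Perm G) :=
  {T | L.IsAutotopism T.1 T.2.1 T.2.2}

/-- The Bryant–Schneider set: all special maps of the loop. -/
def BSset (L : Loop G) : Set (Equiv.Perm G) :=
  {θ | ∃ f g : G, L.IsAutotopism (θ.trans (L.Rt g)⁻¹) (θ.trans (L.Lt f)⁻¹) θ}

/-- `SSYM`: the bijections of `G` mapping `H` into itself. -/
def SSYMset (H : Set G) : Set (Equiv.Perm G) :=
  {θ | ∀ h ∈ H, θ h ∈ H}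

/-- The Smarandache Bryant–Schneider set relative to the S-subgroup `H`. -/
def SBSset (L : Loop G) (H : Set G) : Set (Equiv.Perm G) :=
  {θ | (∀ h ∈ H, θ h ∈ H) ∧
    ∃ f ∈ H, ∃ g ∈ H, L.IsAutotopism (θ.trans (L.Rt g)⁻¹) (θ.trans (L.Lt f)⁻¹) θ}

/-- `H` is an S-subgroup of the loop `L`: a nontrivial proper subgroup. -/
structure IsSSubgroup (L : Loop G) (H : Set G) : Prop where
  nontrivial : ∃ a ∈ H, a ≠ L.e
  proper : H ≠ Set.univ
  one_mem : L.e ∈ H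
  mul_mem : ∀ a ∈ H, ∀ b ∈ H, L.mul a b ∈ H
  inv_mem : ∀ a ∈ H, ∃ b ∈ H, L.mul a b = L.e ∧ L.mul b a = L.e
  mul_assoc : ∀ a ∈ H, ∀ b ∈ H, ∀ c ∈ H, L.mul (L.mul a b) c = L.mul a (L.mul b c)

/-- The multiplication `x ∘ y = xR_g⁻¹ · yL_f⁻¹` of the `f,g`-principal isotope. -/
noncomputable def isoMul (L : Loop G) (f g : G) (x y : G) : G :=
  L.mul ((L.Rt g)⁻¹ x) ((L.Lt f)⁻¹ y)

/-- The middle nucleus `N_μ` of a loop. -/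
def middleNucleus (L : Loop G) : Set G :=
  {g | ∀ x y, L.mul x (L.mul g y) = L.mul (L.mul x g) y}

/-- `Ω(G,·)`: autotopisms of the form `(θR_g⁻¹, θL_f⁻¹, θ)` with `f, g ∈ H` and
`θ` mapping `H` into itself. -/
def OmegaSet (L : Loop G) (H : Set G) :
    Set (Equiv.Perm G × Equiv.Perm G × Equiv.Perm G) :=
  {T | (∀ h ∈ H, T.2.2 h ∈ H) ∧
    ∃ f ∈ H, ∃ g ∈ H, T.1 = T.2.2.trans (L.Rt g)⁻¹ ∧ T.2.1 = T.2.2.trans (L.Lt f)⁻¹ ∧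
      L.IsAutotopism T.1 T.2.1 T.2.2}

/-- The Smarandache automorphism set `SA(G,·)` relative to `H`. -/
def SAset (L : Loop G) (H : Set G) : Set (Equiv.Perm G) :=
  {θ | (∀ h ∈ H, θ h ∈ H) ∧ ∀ x y, θ (L.mul x y) = L.mul (θ x) (θ y)}

/-- `θ` is an S-isomorphism from `(L, H)` onto `(M, H')`. -/
def IsSIso (L M : Loop G) (H H' : Set G) (θ : Equiv.Perm G) : Prop :=
  (∀ h ∈ H, θ h ∈ H') ∧ ∀ x y, θ (L.mul x y) = M.mul (θ x) (θ y)

/-- `Θ(G,·)`: the pairs `(f,g) ∈ H × H` such that the Smarandache `f,g`-principal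
isotope of `L` is S-isomorphic to `L`. -/
def ThetaSet (L : Loop G) (H : Set G) : Set (G × G) :=
  {p | p.1 ∈ H ∧ p.2 ∈ H ∧
    ∃ M : Loop G, M.mul = L.isoMul p.1 p.2 ∧ ∃ θ : Equiv.Perm G, IsSIso M L H H θ}

/-- A GS-loop: an S-loop that is S-isomorphic to every S-loop isotope of itself. -/
def IsGSLoop (L : Loop G) (H : Set G) : Prop :=
  ∀ M : Loop G,
    (∃ U V W : Equiv.Perm G, ∀ x y, M.mul (U x) (V y) = W (L.mul x y)) →
    (∃ H' : Set G, M.IsSSubgroup H') →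
    ∃ H' : Set G, M.IsSSubgroup H' ∧ ∃ θ : Equiv.Perm G, IsSIso L M H H' θ

theorem Rt_inv_mul (L : Loop G) (a x : G) : (L.Rt a)⁻¹ (L.mul x a) = x :=
  (L.Rt a).symm_apply_apply x

theorem Lt_inv_mul (L : Loop G) (a x : G) : (L.Lt a)⁻¹ (L.mul a x) = x :=
  (L.Lt a).symm_apply_apply x

theorem mul_Rt_inv (L : Loop G) (a x : G) : L.mul ((L.Rt a)⁻¹ x) a = x :=
  (L.Rt a).apply_symm_apply x

theorem mul_Lt_inv (L : Loop G) (a x : G) : L.mul a ((L.Lt a)⁻¹ x) = x :=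
  (L.Lt a).apply_symm_apply x

theorem isoMul_left_bijective (L : Loop G) (f g a : G) :
    Function.Bijective (L.isoMul f g a) :=
  (L.mulLeft_bijective _).comp (L.Lt f)⁻¹.bijective

theorem isoMul_right_bijective (L : Loop G) (f g a : G) :
    Function.Bijective (fun x => L.isoMul f g x a) :=
  (L.mulRight_bijective _).comp (L.Rt g)⁻¹.bijective

noncomputable def principalIsotope (L : Loop G) (f g : G) : Loop G where
  mul := L.isoMul f g
  e := L.mul f g
  one_mul x := by rw [isoMul, Rt_inv_mul, mul_Lt_inv]
  mul_one x := by rw [isoMul, Lt_inv_mul, mul_Rt_inv]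
  exU_right a := (L.isoMul_left_bijective f g a).existsUnique
  exU_left a := (L.isoMul_right_bijective f g a).existsUnique

theorem isAutotopism_iff_isoMul (L : Loop G) (f g : G) (θ : Equiv.Perm G) :
    L.IsAutotopism (θ.trans (L.Rt g)⁻¹) (θ.trans (L.Lt f)⁻¹) θ ↔
      ∀ x y, θ (L.mul x y) = L.isoMul f g (θ x) (θ y) := by
  simp only [IsAutotopism, Equiv.trans_apply, isoMul, eq_comm]

theorem isSIso_iff_isAutotopism {L M : Loop G} {f g : G} (hM : M.mul = L.isoMul f g)
    (H : Set G) (θ : Equiv.Perm G) :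
    IsSIso L M H H θ ↔
      (∀ h ∈ H, θ h ∈ H) ∧ L.IsAutotopism (θ.trans (L.Rt g)⁻¹) (θ.trans (L.Lt f)⁻¹) θ := by
  rw [isAutotopism_iff_isoMul, IsSIso, hM]

end Loop

theorem mem_SBS_iff_sIso_onto_isotope_general {G : Type*} (L : Loop G) (H : Set G)
    (θ : Equiv.Perm G) :
    θ ∈ L.SBSset H ↔
      ∃ f ∈ H, ∃ g ∈ H, ∃ M : Loop G, M.mul = L.isoMul f g ∧
        Loop.IsSIso L M H H θ := by
  constructor
  · rintro ⟨hθH, f, hf, g, hg, hauto⟩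
    exact ⟨f, hf, g, hg, L.principalIsotope f g, rfl,
      (Loop.isSIso_iff_isAutotopism rfl H θ).2 ⟨hθH, hauto⟩⟩
  · rintro ⟨f, hf, g, hg, M, hM, hiso⟩
    obtain ⟨hθH, hauto⟩ := (Loop.isSIso_iff_isAutotopism hM H θ).1 hiso
    exact ⟨hθH, f, hf, g, hg, hauto⟩

/-- Let `(G,·)` be a Smarandache loop with S-subgroup `(H,·)`.
A bijection `θ` of `G` belongs to `SBS(G,·)` if and only if `θ` is an
S-isomorphism of `(G,·)` onto some Smarandache `f,g`-principal isotope `(G,∘)`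
with `f, g ∈ H`. -/
theorem mem_SBS_iff_sIso_onto_isotope {G : Type*} (L : Loop G) (H : Set G)
    (hH : L.IsSSubgroup H) (θ : Equiv.Perm G) :
    θ ∈ L.SBSset H ↔
      ∃ f ∈ H, ∃ g ∈ H, ∃ M : Loop G, M.mul = L.isoMul f g ∧
        Loop.IsSIso L M H H θ :=
  mem_SBS_iff_sIso_onto_isotope_general L H θ
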